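/- Given n exchangeable (in fact i.i.d.) real-valued nonconformity scores s₁,…,sₙ and a test score s_{n+1} drawn exchangeably with them, if q̂ is the ⌈(n+1)(1−α)⌉/n empirical quantile of s₁,…,sₙ with α ∈ (0,1) and ⌈(n+1)(1−α)⌉ ≤ n, then P(s_{n+1} ≤ q̂) ≥ 1 − α. -/

import Mathlib

open MeasureTheory Finset
open scoped ENNReal

namespace Stmt2Aux

noncomputable def rankF (n : ℕ) (x : Fin (n+1) → ℝ) (i : Fin (n+1)) : ℕ :=
  (Finset.univ.filter (fun j => x j ≤ x i)).card

lemma card_filter_comp {m : ℕ} (π : Equiv.Perm (Fin m)) (p : Fin m → Prop) [DecidablePred p] :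
    (Finset.univ.filter fun j => p (π j)).card = (Finset.univ.filter p).card := by
  apply Finset.card_bij (fun j _ => π j)
  · intro a ha; simp at ha ⊢; exact ha
  · intro a ha b hb h; exact π.injective h
  · intro b hb; exact ⟨π.symm b, by simpa using hb, by simp⟩

lemma rankF_comp_perm {n : ℕ} (x : Fin (n+1) → ℝ) (π : Equiv.Perm (Fin (n+1))) (i : Fin (n+1)) :
    rankF n (x ∘ π) i = rankF n x (π i) := by
  unfold rankF
  exact card_filter_comp π (fun j => x j ≤ x (π i))

lemma one_le_rankF {n : ℕ} (x : Fin (n+1) → ℝ) (i : Fin (n+1)) : 1 ≤ rankF n x i := by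
  unfold rankF; rw [Nat.one_le_iff_ne_zero, ← Nat.pos_iff_ne_zero, Finset.card_pos]
  exact ⟨i, by simp⟩

lemma rankF_le {n : ℕ} (x : Fin (n+1) → ℝ) (i : Fin (n+1)) : rankF n x i ≤ n + 1 := by
  simpa [rankF] using Finset.card_filter_le Finset.univ (fun j => x j ≤ x i)

lemma rankF_lt_of_lt {n : ℕ} {x : Fin (n+1) → ℝ} {i j : Fin (n+1)} (h : x i < x j) :
    rankF n x i < rankF n x j := by
  apply Finset.card_lt_card
  constructor
  · intro a ha; simp at ha ⊢; exact ha.trans h.le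
  · intro hsub
    have := hsub (by simp : j ∈ Finset.univ.filter fun a => x a ≤ x j)
    simp at this
    exact absurd (this.trans_lt h) (lt_irrefl _)

lemma rankF_injective {n : ℕ} {x : Fin (n+1) → ℝ} (hx : Function.Injective x) :
    Function.Injective (rankF n x) := by
  intro i j h
  by_contra hij
  rcases lt_trichotomy (x i) (x j) with hlt | heq | hgt
  · exact absurd h (rankF_lt_of_lt hlt).ne
  · exact hij (hx heq)
  · exact absurd h.symm (rankF_lt_of_lt hgt).ne

lemma rankF_surj {n : ℕ} {x : Fin (n+1) → ℝ} (hx : Function.Injective x) {r : ℕ}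
    (hr1 : 1 ≤ r) (hr2 : r ≤ n + 1) : ∃ i, rankF n x i = r := by
  have himg : (Finset.univ.image (rankF n x)) = Finset.Icc 1 (n+1) := by
    apply Finset.eq_of_subset_of_card_le
    · intro r hr
      simp at hr
      obtain ⟨i, hi⟩ := hr
      rw [Finset.mem_Icc, ← hi]
      exact ⟨one_le_rankF x i, rankF_le x i⟩
    · rw [Nat.card_Icc, Finset.card_image_of_injective _ (rankF_injective hx)]
      simp
  have : r ∈ Finset.univ.image (rankF n x) := by
    rw [himg, Finset.mem_Icc]; exact ⟨hr1, hr2⟩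
  simpa using this

lemma measurable_rankF {n : ℕ} (i : Fin (n+1)) :
    Measurable (fun x : Fin (n+1) → ℝ => rankF n x i) := by
  unfold rankF
  simp_rw [Finset.card_filter]
  apply Finset.measurable_sum
  intro j _
  exact Measurable.ite (measurableSet_le (measurable_pi_apply j) (measurable_pi_apply i))
    measurable_const measurable_const


lemma rankF_last {n : ℕ} {x : Fin (n+1) → ℝ} (hx : Function.Injective x) :
    (Finset.univ.filter (fun j => x j ≤ x (Fin.last n))).card
      = (Finset.univ.filter fun i : Fin n => x i.castSucc < x (Fin.last n)).card + 1 := by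
  rw [Finset.card_filter, Finset.card_filter, Fin.sum_univ_castSucc]
  simp only [le_refl, if_true]
  congr 1
  apply Finset.sum_congr rfl
  intro i _
  congr 1
  have hne : x i.castSucc ≠ x (Fin.last n) := by
    intro h; exact absurd (hx h) (Fin.castSucc_lt_last i).ne
  simp [lt_iff_le_and_ne, hne]

lemma countP_ofFn {n : ℕ} (f : Fin n → ℝ) (t : ℝ) :
    Multiset.countP (fun a => a < t) (Multiset.ofList (List.ofFn f))
      = (Finset.univ.filter fun i : Fin n => f i < t).card := by
  classical
  rw [List.ofFn_eq_map]
  rw [show (Multiset.ofList ((List.finRange n).map f)) = Multiset.map f (Multiset.ofList (List.finRange n)) from rfl]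
  rw [Multiset.countP_map]
  rw [Finset.card_def, Finset.filter_val]
  rfl


lemma sorted_count {l : List ℝ} (hs : l.Pairwise (· ≤ ·)) {k : ℕ} (hk1 : 1 ≤ k)
    (hkl : k ≤ l.length) {t : ℝ} (h : l.getD (k-1) 0 < t) :
    k ≤ l.countP (fun a => a < t) := by
  have hlt : k - 1 < l.length := lt_of_lt_of_le (Nat.sub_lt hk1 one_pos) hkl
  rw [List.getD_eq_getElem l 0 hlt] at h
  calc k = (l.take k).length := by rw [List.length_take]; omega
    _ = (l.take k).countP (fun a => decide (a < t)) := by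
        rw [eq_comm, List.countP_eq_length]
        intro a ha
        rw [List.mem_iff_getElem] at ha
        obtain ⟨i, hi, rfl⟩ := ha
        have hik : i < k := by rw [List.length_take] at hi; omega
        have hil : i < l.length := by rw [List.length_take] at hi; omega
        rw [List.getElem_take]
        have : l[i] ≤ l[k-1] := by
          rcases eq_or_lt_of_le (show i ≤ k - 1 by omega) with h'|h'
          · simp [h']
          · simpa [List.get_eq_getElem] using List.pairwise_iff_get.1 hs _ _ (show (⟨i, hil⟩ : Fin l.length) < ⟨k-1, hlt⟩ from h')
        simpa using lt_of_le_of_lt this h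
    _ ≤ l.countP (fun a => decide (a < t)) := List.Sublist.countP_le (List.take_sublist k l)


end Stmt2Aux

open Stmt2Aux

/-- the conformal prediction quantile lemma. Scores `s 0, …, s (n-1)` are the
calibration scores and `s n` (i.e. `s (Fin.last n)`) is the test score; they are exchangeable.
`q̂` is the `⌈(n+1)(1-α)⌉`-th smallest of the first `n` scores. Then
`P(s_{n+1} ≤ q̂) ≥ 1 - α`. -/
theorem stmt_2 {Ω : Type*} [MeasurableSpace Ω] (μ : Measure Ω) [IsProbabilityMeasure μ]
    (n : ℕ) (hn : 0 < n) (α : ℝ) (hα : 0 < α) (hα1 : α < 1)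
    (s : Fin (n + 1) → Ω → ℝ)
    (hmeas : ∀ i, Measurable (s i))
    (hexch : ∀ π : Equiv.Perm (Fin (n + 1)),
      Measure.map (fun ω i => s (π i) ω) μ = Measure.map (fun ω i => s i ω) μ)
    (hdistinct : ∀ᵐ ω ∂μ, Function.Injective (fun i => s i ω))
    (k : ℕ) (hk : (k : ℝ) = ⌈((n : ℝ) + 1) * (1 - α)⌉) (hkn : k ≤ n)
    (qhat : Ω → ℝ)
    (hq : ∀ ω, qhat ω =
      (Multiset.sort (Multiset.ofList (List.ofFn fun i : Fin n => s i.castSucc ω)) (· ≤ ·)).getD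
        (k - 1) 0) :
    μ {ω | s (Fin.last n) ω ≤ qhat ω} ≥ ENNReal.ofReal (1 - α) := by
  classical
  -- basic facts about k
  have hpos : (0:ℝ) < ((n:ℝ)+1) * (1-α) := by
    have : (0:ℝ) < (n:ℝ)+1 := by positivity
    nlinarith
  have hkreal : ((n:ℝ)+1) * (1-α) ≤ (k:ℝ) := by rw [hk]; exact Int.le_ceil _
  have hk1 : 1 ≤ k := by
    by_contra h
    push_neg at h
    interval_cases k
    simp at hk
    nlinarith [Int.le_ceil (((n:ℝ)+1) * (1-α))]
  -- the vector of scores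
  set v : Ω → (Fin (n+1) → ℝ) := fun ω i => s i ω with hv_def
  have hv : Measurable v := measurable_pi_lambda _ hmeas
  -- rank of the test point
  set R : Fin (n+1) → Ω → ℕ := fun i ω => rankF n (v ω) i with hR_def
  have hmeasR : ∀ i, Measurable fun x : Fin (n+1) → ℝ => rankF n x i := fun i =>
    measurable_rankF i
  have hCmeas : ∀ i r, MeasurableSet {ω | R i ω = r} := by
    intro i r
    exact hv (hmeasR i (measurableSet_singleton r))
  -- exchangeability: rank distribution doesn't depend on the index
  have hswap : ∀ i r, μ {ω | R i ω = r} = μ {ω | R (Fin.last n) ω = r} := by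
    intro i r
    set π := Equiv.swap (Fin.last n) i with hπ
    have hmap := hexch π
    have hTmeas : MeasurableSet {x : Fin (n+1) → ℝ | rankF n x (Fin.last n) = r} :=
      hmeasR (Fin.last n) (measurableSet_singleton r)
    have hgm : Measurable (fun ω i => s (π i) ω) :=
      measurable_pi_lambda _ (fun i => hmeas (π i))
    have h1 : μ {ω | R (Fin.last n) ω = r}
        = Measure.map (fun ω i => s i ω) μ {x | rankF n x (Fin.last n) = r} := by
      rw [Measure.map_apply hv hTmeas]
      rfl
    rw [h1, ← hmap, Measure.map_apply hgm hTmeas]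
    congr 1
    ext ω
    simp only [Set.mem_preimage, Set.mem_setOf_eq]
    have : (fun i => s (π i) ω) = (v ω) ∘ π := rfl
    rw [this, rankF_comp_perm]
    have : π (Fin.last n) = i := Equiv.swap_apply_left _ _
    rw [this]
  -- each rank value has probability at least 1/(n+1)
  have hlow : ∀ r : ℕ, 1 ≤ r → r ≤ n + 1 →
      (((n:ℝ≥0∞)+1))⁻¹ ≤ μ {ω | R (Fin.last n) ω = r} := by
    intro r hr1 hr2
    have hcover : ∀ᵐ ω ∂μ, ω ∈ ⋃ i, {ω | R i ω = r} := by
      filter_upwards [hdistinct] with ω hinj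
      obtain ⟨i, hi⟩ := rankF_surj (x := v ω) hinj hr1 hr2
      exact Set.mem_iUnion.2 ⟨i, hi⟩
    have h1 : (1:ℝ≥0∞) ≤ μ (⋃ i, {ω | R i ω = r}) := by
      have := measure_mono_ae (μ := μ) (s := Set.univ) (t := ⋃ i, {ω | R i ω = r})
        (by filter_upwards [hcover] with ω h _; exact h)
      simpa using this
    have h2 : μ (⋃ i, {ω | R i ω = r}) ≤ ∑ i : Fin (n+1), μ {ω | R i ω = r} :=
      measure_iUnion_fintype_le _ _
    have h3 : ∑ i : Fin (n+1), μ {ω | R i ω = r}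
        = ((n:ℝ≥0∞)+1) * μ {ω | R (Fin.last n) ω = r} := by
      rw [Finset.sum_congr rfl (fun i _ => hswap i r)]
      rw [Finset.sum_const, Finset.card_univ, Fintype.card_fin]
      rw [nsmul_eq_mul]
      push_cast
      ring
    have hne : ((n:ℝ≥0∞)+1) ≠ 0 := by simp
    have hnt : ((n:ℝ≥0∞)+1) ≠ ⊤ := by
      simp [ENNReal.add_eq_top]
    calc (((n:ℝ≥0∞)+1))⁻¹ = (((n:ℝ≥0∞)+1))⁻¹ * 1 := (mul_one _).symm
      _ ≤ (((n:ℝ≥0∞)+1))⁻¹ * (((n:ℝ≥0∞)+1) * μ {ω | R (Fin.last n) ω = r}) := by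
          gcongr
          exact h1.trans (h2.trans_eq h3)
      _ = μ {ω | R (Fin.last n) ω = r} := by
          rw [← mul_assoc, ENNReal.inv_mul_cancel hne hnt, one_mul]
  -- a.e., low rank implies being below the empirical quantile
  have hincl : ∀ᵐ ω ∂μ, R (Fin.last n) ω ≤ k → s (Fin.last n) ω ≤ qhat ω := by
    filter_upwards [hdistinct] with ω hinj
    intro hRk
    by_contra hcon
    push_neg at hcon
    set t := s (Fin.last n) ω with ht
    set m := Multiset.ofList (List.ofFn fun i : Fin n => s i.castSucc ω) with hm
    set l := Multiset.sort m (· ≤ ·) with hl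
    have hsorted : l.Pairwise (· ≤ ·) := Multiset.pairwise_sort _ _
    have hlen : l.length = n := by
      rw [hl, Multiset.length_sort, hm]
      simp
    have hkl : k ≤ l.length := by rw [hlen]; exact hkn
    have hqd : l.getD (k-1) 0 < t := by rw [← hq ω]; exact hcon
    have hcount : k ≤ l.countP (fun a => decide (a < t)) :=
      sorted_count hsorted hk1 hkl hqd
    have hcount2 : l.countP (fun a => decide (a < t)) = Multiset.countP (fun a => a < t) m := by
      rw [← Multiset.coe_countP]
      congr 1
      rw [hl, Multiset.sort_eq]
    have hcount3 : Multiset.countP (fun a => a < t) m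
        = (Finset.univ.filter fun i : Fin n => (v ω) i.castSucc < (v ω) (Fin.last n)).card := by
      rw [hm, countP_ofFn]
    have hrank : R (Fin.last n) ω
        = (Finset.univ.filter fun i : Fin n => (v ω) i.castSucc < (v ω) (Fin.last n)).card + 1 :=
      rankF_last hinj
    omega
  -- disjointness of rank level sets
  have hdisj : (↑(Finset.Icc 1 k) : Set ℕ).PairwiseDisjoint
      (fun r => {ω | R (Fin.last n) ω = r}) := by
    intro r _ r' _ hrr'
    apply Set.disjoint_left.2
    intro ω h1 h2
    exact hrr' (h1.symm.trans h2)
  have hsub : {ω | R (Fin.last n) ω ≤ k} = ⋃ r ∈ Finset.Icc 1 k, {ω | R (Fin.last n) ω = r} := by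
    ext ω
    simp only [Set.mem_setOf_eq, Set.mem_iUnion, Finset.mem_Icc]
    constructor
    · intro h
      exact ⟨R (Fin.last n) ω, ⟨one_le_rankF _ _, h⟩, rfl⟩
    · rintro ⟨r, ⟨h1, h2⟩, hr⟩
      rw [hr]; exact h2
  have hne : ((n:ℝ≥0∞)+1) ≠ 0 := by simp
  have hnt : ((n:ℝ≥0∞)+1) ≠ ⊤ := by simp [ENNReal.add_eq_top]
  calc μ {ω | s (Fin.last n) ω ≤ qhat ω}
      ≥ μ {ω | R (Fin.last n) ω ≤ k} :=
        measure_mono_ae (by filter_upwards [hincl] with ω h hm; exact h hm)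
    _ = ∑ r ∈ Finset.Icc 1 k, μ {ω | R (Fin.last n) ω = r} := by
        rw [hsub]
        exact measure_biUnion_finset hdisj (fun r _ => hCmeas _ r)
    _ ≥ ∑ r ∈ Finset.Icc 1 k, (((n:ℝ≥0∞)+1))⁻¹ :=
        Finset.sum_le_sum (fun r hr => by
          rw [Finset.mem_Icc] at hr
          exact hlow r hr.1 (hr.2.trans (hkn.trans (Nat.le_succ n))))
    _ = (k:ℝ≥0∞) * (((n:ℝ≥0∞)+1))⁻¹ := by
        rw [Finset.sum_const, Nat.card_Icc]
        simp [nsmul_eq_mul]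
    _ ≥ ENNReal.ofReal (1 - α) := by
        rw [ge_iff_le, ← div_eq_mul_inv]
        rw [ENNReal.le_div_iff_mul_le (Or.inl hne) (Or.inl hnt)]
        have h1 : ((n:ℝ≥0∞)+1) = ENNReal.ofReal ((n:ℝ)+1) := by
          rw [ENNReal.ofReal_add (by positivity) zero_le_one, ENNReal.ofReal_natCast,
            ENNReal.ofReal_one]
        have h2 : (k:ℝ≥0∞) = ENNReal.ofReal (k:ℝ) := (ENNReal.ofReal_natCast k).symm
        rw [h1, h2, ← ENNReal.ofReal_mul (by linarith)]
        exact ENNReal.ofReal_le_ofReal (by nlinarith)
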